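/- Let N be a binary tree-child network and let x, y be two leaves with d_N(x,y) ≥ 4. Then no maximum lower-level subnetwork (MLLS) of N contains x and y as a cherry (i.e., with a common parent). -/

import Mathlib

open scoped Classical
noncomputable section

/-- A (rooted binary phylogenetic) network datum: a finite directed graph on `ℕ`
with an optional leaf-labelling by `α`. -/
structure Net (α : Type) where
  verts : Finset ℕ
  edges : Finset (ℕ × ℕ)
  lab : ℕ → Option α

namespace Net

variable {α β : Type}

def Edge (N : Net α) (u v : ℕ) : Prop := (u, v) ∈ N.edges

def indeg (N : Net α) (v : ℕ) : ℕ := (N.edges.filter fun e => e.2 = v).card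
def outdeg (N : Net α) (v : ℕ) : ℕ := (N.edges.filter fun e => e.1 = v).card

/-- Reachability by directed paths. -/
def Reaches (N : Net α) : ℕ → ℕ → Prop := Relation.ReflTransGen N.Edge

def IsRoot (N : Net α) (v : ℕ) : Prop :=
  v ∈ N.verts ∧ N.indeg v = 0 ∧ N.outdeg v = 1
def IsLeaf (N : Net α) (v : ℕ) : Prop :=
  v ∈ N.verts ∧ N.indeg v = 1 ∧ N.outdeg v = 0
def IsTreeNode (N : Net α) (v : ℕ) : Prop :=
  v ∈ N.verts ∧ N.indeg v = 1 ∧ N.outdeg v = 2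
def IsRetic (N : Net α) (v : ℕ) : Prop :=
  v ∈ N.verts ∧ N.indeg v = 2 ∧ N.outdeg v = 1

/-- `N` is a rooted binary phylogenetic network on leaf set `α`. -/
def IsNetwork (N : Net α) : Prop :=
  (∀ e ∈ N.edges, e.1 ∈ N.verts ∧ e.2 ∈ N.verts) ∧
  (∀ u v, N.Edge u v → ¬ N.Reaches v u) ∧
  (∃! r, N.IsRoot r) ∧
  (∀ v ∈ N.verts, N.IsRoot v ∨ N.IsLeaf v ∨ N.IsTreeNode v ∨ N.IsRetic v) ∧
  (∀ v, (∃ x, N.lab v = some x) ↔ N.IsLeaf v) ∧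
  (∀ x : α, ∃! v, N.lab v = some x)

/-- Tree-child: every non-leaf node has a child that is a tree node or a leaf. -/
def TreeChild (N : Net α) : Prop :=
  N.IsNetwork ∧
  ∀ v ∈ N.verts, ¬ N.IsLeaf v → ∃ c, N.Edge v c ∧ (N.IsTreeNode c ∨ N.IsLeaf c)

def IsReticEdge (N : Net α) (e : ℕ × ℕ) : Prop := e ∈ N.edges ∧ N.IsRetic e.2

def deleteNode (N : Net α) (v : ℕ) : Net α :=
  ⟨N.verts.erase v, N.edges.filter fun e => e.1 ≠ v ∧ e.2 ≠ v, N.lab⟩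

def deleteEdge (N : Net α) (e : ℕ × ℕ) : Net α := ⟨N.verts, N.edges.erase e, N.lab⟩

def deleteEdges (N : Net α) (E : Finset (ℕ × ℕ)) : Net α := ⟨N.verts, N.edges \ E, N.lab⟩

/-- One step of cleaning up: delete an unlabelled outdegree-0 node, or suppress an
indegree-1 outdegree-1 node.  (In this simple-digraph encoding the parallel-edge rule
is subsumed: the inserted edge merges with an existing one, and the endpoints are then
suppressed by further steps.) -/
inductive CleanStep {α : Type} : Net α → Net α → Prop
  | delNode (N : Net α) (v : ℕ) (hv : v ∈ N.verts) (h0 : N.outdeg v = 0)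
      (hlab : N.lab v = none) : CleanStep N (N.deleteNode v)
  | suppress (N : Net α) (u v w : ℕ) (h1 : N.indeg v = 1) (h2 : N.outdeg v = 1)
      (hu : N.Edge u v) (hw : N.Edge v w) :
      CleanStep N ⟨N.verts.erase v,
        insert (u, w) (N.edges.filter fun e => e.1 ≠ v ∧ e.2 ≠ v), N.lab⟩

/-- `N` cleans up to `M`: apply clean-up steps until none applies. -/
def CleansTo (N M : Net α) : Prop :=
  Relation.ReflTransGen CleanStep N M ∧ ∀ M', ¬ CleanStep M M'

/-- Maximum subnetwork: delete one reticulation edge and clean up. -/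
def IsMaxSubnet (N M : Net α) : Prop :=
  ∃ e, N.IsReticEdge e ∧ CleansTo (N.deleteEdge e) M

/-- A reticulation edge is valid if deleting it and cleaning up removes exactly
2 nodes and 3 edges. -/
def ValidEdge (N : Net α) (e : ℕ × ℕ) : Prop :=
  N.IsReticEdge e ∧
  ∀ M, CleansTo (N.deleteEdge e) M →
    M.verts.card + 2 = N.verts.card ∧ M.edges.card + 3 = N.edges.card

/-- A valid network: all reticulation edges are valid. -/
def Valid (N : Net α) : Prop :=
  N.IsNetwork ∧ ∀ e, N.IsReticEdge e → N.ValidEdge e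

def Subgraph (M N : Net α) : Prop :=
  M.verts ⊆ N.verts ∧ M.edges ⊆ N.edges ∧ ∀ v ∈ M.verts, M.lab v = N.lab v

/-- One edge-subdivision step. -/
inductive SubdivStep {α : Type} : Net α → Net α → Prop
  | mk (N : Net α) (u v w : ℕ) (he : N.Edge u v) (hw : w ∉ N.verts) :
      SubdivStep N ⟨insert w N.verts,
        insert (u, w) (insert (w, v) (N.edges.erase (u, v))), N.lab⟩

/-- `M` is a subdivision of `N`. -/
def Subdivision (N M : Net α) : Prop := Relation.ReflTransGen SubdivStep N M

/-- Isomorphism of networks (preserving leaf labels). -/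
def Iso (N M : Net α) : Prop :=
  ∃ f : ℕ → ℕ, Set.BijOn f ↑N.verts ↑M.verts ∧
    (∀ u ∈ N.verts, ∀ v ∈ N.verts, (N.Edge u v ↔ M.Edge (f u) (f v))) ∧
    ∀ v ∈ N.verts, N.lab v = M.lab (f v)

/-- `N` displays `M`: some subgraph of `N` is (isomorphic to) a subdivision of `M`. -/
def Displays (N M : Net α) : Prop :=
  ∃ S M', Subgraph S N ∧ Subdivision M M' ∧ Iso M' S

/-- Leaf-descendant (label) set of a node. -/
def descSet (N : Net α) (v : ℕ) : Set α :=
  {x | ∃ l, N.lab l = some x ∧ N.Reaches v l}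

def Adj (N : Net α) (u v : ℕ) : Prop := N.Edge u v ∨ N.Edge v u

def ConnectedIn (N : Net α) (S : Finset ℕ) (u v : ℕ) : Prop :=
  Relation.ReflTransGen (fun a b => a ∈ S ∧ b ∈ S ∧ N.Adj a b) u v

/-- A biconnected vertex set: at least 3 nodes, connected, and no cut-node. -/
def BiconnectedSet (N : Net α) (S : Finset ℕ) : Prop :=
  3 ≤ S.card ∧ S ⊆ N.verts ∧
  (∀ u ∈ S, ∀ v ∈ S, N.ConnectedIn S u v) ∧
  ∀ c ∈ S, ∀ u ∈ S.erase c, ∀ v ∈ S.erase c, N.ConnectedIn (S.erase c) u v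

/-- A biconnected component: a maximal biconnected set. -/
def BlobSet (N : Net α) (S : Finset ℕ) : Prop :=
  N.BiconnectedSet S ∧ ∀ T, N.BiconnectedSet T → S ⊆ T → S = T

/-- A blob: either a biconnected component, or a tree node in no biconnected component. -/
def IsBlob (N : Net α) (S : Finset ℕ) : Prop :=
  N.BlobSet S ∨ ∃ t, S = {t} ∧ N.IsTreeNode t ∧ ∀ T, N.BlobSet T → t ∉ T

/-- The top node of a blob: the node of the blob from which all its nodes are reachable. -/
def TopNode (N : Net α) (S : Finset ℕ) (v : ℕ) : Prop :=
  v ∈ S ∧ ∀ u ∈ S, N.Reaches v u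

/-- The blob tree of `N` contains a blob node labelled `A`. -/
def HasBlobNode (N : Net α) (A : Set α) : Prop :=
  ∃ S v, N.IsBlob S ∧ N.TopNode S v ∧ N.descSet v = A

/-- The blob tree of `N` has an edge from blob node `A` to blob node `B`. -/
def BTEdge (N : Net α) (A B : Set α) : Prop :=
  ∃ S T u v, N.IsBlob S ∧ N.IsBlob T ∧ S ≠ T ∧ N.TopNode S u ∧ N.TopNode T v ∧
    N.descSet u = A ∧ N.descSet v = B ∧ ∃ w ∈ S, N.Edge w v

def reticCount (N : Net α) (S : Finset ℕ) : ℕ := (S.filter fun v => N.IsRetic v).card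

/-- `N` is a level-`k` network. -/
def IsLevel (N : Net α) (k : ℕ) : Prop :=
  (∀ S, N.BiconnectedSet S → N.reticCount S ≤ k) ∧
  (k = 0 ∨ ∃ S, N.BiconnectedSet S ∧ N.reticCount S = k)

/-- `M` is a maximum lower-level subnetwork (MLLS) of the level-`k` network `N`:
obtained by deleting exactly one valid reticulation edge from every level-`k`
biconnected component and cleaning up. -/
def IsMLLS (N : Net α) (k : ℕ) (M : Net α) : Prop :=
  ∃ E : Finset (ℕ × ℕ),
    (∀ e ∈ E, N.ValidEdge e) ∧
    (∀ S, N.BlobSet S → N.reticCount S = k → ∃! e, e ∈ E ∧ e.1 ∈ S ∧ e.2 ∈ S) ∧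
    (∀ e ∈ E, ∃ S, N.BlobSet S ∧ N.reticCount S = k ∧ e.1 ∈ S ∧ e.2 ∈ S) ∧
    CleansTo (N.deleteEdges E) M

/-- A cherry on two leaves. -/
def Cherry (N : Net α) (x y : ℕ) : Prop :=
  N.IsLeaf x ∧ N.IsLeaf y ∧ x ≠ y ∧ ∃ p, N.Edge p x ∧ N.Edge p y

/-- A reticulated cherry on two leaves, with the reticulation on `y`. -/
def RetCherry (N : Net α) (x y : ℕ) : Prop :=
  N.IsLeaf x ∧ N.IsLeaf y ∧
  ∃ p r, N.IsRetic r ∧ N.Edge r y ∧ N.Edge p x ∧ N.Edge p r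

/-- A reticulated cherry shape on non-reticulation nodes `x, y` with nodes
`px, py, gy` and edges `(px,x), (px,py), (gy,py), (py,y)`, `py` a reticulation. -/
def RetCherryShape (N : Net α) (x y px py gy : ℕ) : Prop :=
  ¬ N.IsRetic x ∧ ¬ N.IsRetic y ∧ N.IsRetic py ∧ px ≠ gy ∧
  N.Edge px x ∧ N.Edge px py ∧ N.Edge gy py ∧ N.Edge py y

def DirPath (N : Net α) (l : List ℕ) : Prop := l ≠ [] ∧ l.Chain' N.Edge

/-- `l` is the node sequence of an up-down path from `x` to `y`: a directed path from
an apex down to `x`, reversed, followed by a directed path from the apex down to `y`. -/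
def IsUpDownPath (N : Net α) (x y : ℕ) (l : List ℕ) : Prop :=
  ∃ p q : List ℕ, N.DirPath p ∧ N.DirPath q ∧ p.head? = q.head? ∧
    p.getLast? = some x ∧ q.getLast? = some y ∧ l = p.reverse ++ q.tail

/-- `n` is the shortest up-down distance between `x` and `y` (an up-down path with `n`
edges has `n+1` nodes). -/
def IsUpDownDist (N : Net α) (x y n : ℕ) : Prop :=
  (∃ l, N.IsUpDownPath x y l ∧ l.length = n + 1) ∧
  ∀ l, N.IsUpDownPath x y l → n + 1 ≤ l.length

def relabel (N : Net α) (f : α → β) : Net β :=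
  ⟨N.verts, N.edges, fun v => (N.lab v).map f⟩

/-- Collapse the pendant subnetwork rooted at `y` to a single leaf labelled `A`. -/
def collapseAt (N : Net α) (y : ℕ) (A : α) : Net α :=
  ⟨N.verts.filter (fun v => v = y ∨ ¬ N.Reaches y v),
   N.edges.filter (fun e => ¬ N.Reaches y e.1),
   fun v => if v = y then some A else N.lab v⟩

/-- Leaf-descendant set for networks whose leaves are labelled by sets of taxa. -/
def descUnion (N : Net (Set α)) (v : ℕ) : Set α :=
  {x | ∃ l s, N.lab l = some s ∧ x ∈ s ∧ N.Reaches v l}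

def HasBlobNodeU (N : Net (Set α)) (A : Set α) : Prop :=
  ∃ S v, N.IsBlob S ∧ N.TopNode S v ∧ N.descUnion v = A

/-- `M` is a subnetwork of `N`: displayed by `N` and not `N` itself. -/
def Subnet (N M : Net α) : Prop := M.IsNetwork ∧ N.Displays M ∧ ¬ N.Iso M

/-- Equality of sets of networks up to isomorphism. -/
def SetEquiv (S T : Set (Net α)) : Prop :=
  ∀ M, (∃ M₁ ∈ S, Iso M M₁) ↔ ∃ M₂ ∈ T, Iso M M₂

/-- The subnetworks of `N` of level at most `k - 1`. -/
def lowerSubnets (N : Net α) (k : ℕ) : Set (Net α) :=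
  {M | N.Subnet M ∧ ∃ j < k, M.IsLevel j}

/-- The set of all MLLSs of `N`. -/
def mllsSet (N : Net α) : Set (Net α) :=
  {M | ∃ k, N.IsLevel k ∧ N.IsMLLS k M}

end Net

/-!
Write `N - E` for `N` without the deleted reticulation edges `E`. Clean-up never deletes a
node and only suppresses endpoints of edges of `E`, so the MLLS is `N - E` with a set `D` of such
endpoints suppressed, and a cherry `p → x, p → y` of it comes from two paths of `N - E` starting
at `p` whose interiors lie in `D`.

In a binary network distinct blobs are vertex-disjoint: a vertex of a blob has two neighbours in
it, and no vertex has more than three neighbours. An endpoint of an edge `f ∈ E` with a leaf child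
has its other two neighbours, in particular its parent, in the blob of `f`. Hence a path from `p`
to the leaf `x` has at most one interior vertex, and when both paths have one, `p` lies in the
blobs of both deleted edges, which therefore coincide. In each case `x` and `y` are joined by an
up-down path of length at most 3.
-/

namespace Net

open Relation

variable {α : Type} {N G M : Net α} {E : Finset (ℕ × ℕ)} {D S T : Finset ℕ} {e f g : ℕ × ℕ}
  {a b c p q t u v w x y z : ℕ} {P Q : List ℕ}

theorem edge_deleteEdges :
    (N.deleteEdges E).Edge a b ↔ N.Edge a b ∧ (a, b) ∉ E := Finset.mem_sdiff

theorem Edge.of_deleteEdges (h : (N.deleteEdges E).Edge a b) : N.Edge a b :=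
  (edge_deleteEdges.1 h).1

theorem outdeg_pos (h : N.Edge v c) : 0 < N.outdeg v :=
  Finset.card_pos.2 ⟨(v, c), Finset.mem_filter.2 ⟨h, rfl⟩⟩

theorem indeg_pos (h : N.Edge u v) : 0 < N.indeg v :=
  Finset.card_pos.2 ⟨(u, v), Finset.mem_filter.2 ⟨h, rfl⟩⟩

theorem exists_edge_of_outdeg_pos (h : 0 < N.outdeg v) : ∃ c, N.Edge v c := by
  obtain ⟨⟨v', c⟩, hmem⟩ := Finset.card_pos.1 h
  obtain ⟨he, rfl : v' = v⟩ := Finset.mem_filter.1 hmem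
  exact ⟨c, he⟩

theorem exists_edge_of_indeg_pos (h : 0 < N.indeg v) : ∃ u, N.Edge u v := by
  obtain ⟨⟨u, v'⟩, hmem⟩ := Finset.card_pos.1 h
  obtain ⟨he, rfl : v' = v⟩ := Finset.mem_filter.1 hmem
  exact ⟨u, he⟩

theorem eq_of_outdeg_eq_one (h : N.outdeg v = 1) (ha : N.Edge v a) (hb : N.Edge v b) :
    a = b :=
  congrArg Prod.snd <| Finset.card_le_one.1 h.le _ (Finset.mem_filter.2 ⟨ha, rfl⟩) _
    (Finset.mem_filter.2 ⟨hb, rfl⟩)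

theorem eq_of_indeg_eq_one (h : N.indeg v = 1) (ha : N.Edge a v) (hb : N.Edge b v) :
    a = b :=
  congrArg Prod.fst <| Finset.card_le_one.1 h.le _ (Finset.mem_filter.2 ⟨ha, rfl⟩) _
    (Finset.mem_filter.2 ⟨hb, rfl⟩)

theorem two_le_outdeg (ha : N.Edge v a) (hb : N.Edge v b) (hab : a ≠ b) : 2 ≤ N.outdeg v :=
  Finset.one_lt_card.2 ⟨_, Finset.mem_filter.2 ⟨ha, rfl⟩, _, Finset.mem_filter.2 ⟨hb, rfl⟩,
    by simpa using hab⟩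

theorem two_le_indeg (ha : N.Edge a v) (hb : N.Edge b v) (hab : a ≠ b) : 2 ≤ N.indeg v :=
  Finset.one_lt_card.2 ⟨_, Finset.mem_filter.2 ⟨ha, rfl⟩, _, Finset.mem_filter.2 ⟨hb, rfl⟩,
    by simpa using hab⟩

theorem eq_or_eq_of_outdeg_eq_two (h : N.outdeg v = 2) (ha : N.Edge v a) (hb : N.Edge v b)
    (hab : a ≠ b) (hc : N.Edge v c) : c = a ∨ c = b := by
  by_contra! hne
  have : 2 < N.outdeg v := Finset.two_lt_card.2
    ⟨_, Finset.mem_filter.2 ⟨ha, rfl⟩, _, Finset.mem_filter.2 ⟨hb, rfl⟩,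
      _, Finset.mem_filter.2 ⟨hc, rfl⟩, by simpa using hab, by simpa using hne.1.symm,
      by simpa using hne.2.symm⟩
  omega

theorem eq_or_eq_of_indeg_eq_two (h : N.indeg v = 2) (ha : N.Edge a v) (hb : N.Edge b v)
    (hab : a ≠ b) (hc : N.Edge c v) : c = a ∨ c = b := by
  by_contra! hne
  have : 2 < N.indeg v := Finset.two_lt_card.2
    ⟨_, Finset.mem_filter.2 ⟨ha, rfl⟩, _, Finset.mem_filter.2 ⟨hb, rfl⟩,
      _, Finset.mem_filter.2 ⟨hc, rfl⟩, by simpa using hab, by simpa using hne.1.symm,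
      by simpa using hne.2.symm⟩
  omega

theorem exists_edge_ne_of_outdeg_eq_two (h : N.outdeg v = 2) (a : ℕ) :
    ∃ b, b ≠ a ∧ N.Edge v b := by
  obtain ⟨⟨v', b⟩, hmem, hne⟩ := Finset.exists_mem_ne (s := N.edges.filter fun e => e.1 = v)
    (by unfold outdeg at h; omega) (v, a)
  obtain ⟨hb, rfl : v' = v⟩ := Finset.mem_filter.1 hmem
  exact ⟨b, by simpa using hne, hb⟩

theorem exists_edge_ne_of_indeg_eq_two (h : N.indeg v = 2) (a : ℕ) :
    ∃ b, b ≠ a ∧ N.Edge b v := by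
  obtain ⟨⟨b, v'⟩, hmem, hne⟩ := Finset.exists_mem_ne (s := N.edges.filter fun e => e.2 = v)
    (by unfold indeg at h; omega) (a, v)
  obtain ⟨hb, rfl : v' = v⟩ := Finset.mem_filter.1 hmem
  exact ⟨b, by simpa using hne, hb⟩

theorem IsRetic.not_isTreeNode (h : N.IsRetic v) : ¬ N.IsTreeNode v :=
  fun h' => by have := h.2.1; have := h'.2.1; omega

theorem IsRetic.not_isLeaf (h : N.IsRetic v) : ¬ N.IsLeaf v :=
  fun h' => by have := h.2.2; have := h'.2.2; omega

theorem IsTreeNode.not_isLeaf (h : N.IsTreeNode v) : ¬ N.IsLeaf v :=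
  fun h' => by have := h.2.2; have := h'.2.2; omega

theorem IsLeaf.not_edge (h : N.IsLeaf v) : ¬ N.Edge v c :=
  fun h' => by have := outdeg_pos h'; have := h.2.2; omega

theorem IsNetwork.not_transGen_self (hN : N.IsNetwork) (a : ℕ) : ¬ TransGen N.Edge a a := by
  intro h
  obtain ⟨c, hac, hca⟩ := TransGen.head'_iff.1 h
  exact hN.2.1 a c hac hca

theorem IsNetwork.not_edge_self (hN : N.IsNetwork) (a : ℕ) : ¬ N.Edge a a :=
  fun h => hN.2.1 a a h .refl

theorem IsNetwork.isRetic_of_edge (hN : N.IsNetwork) (ha : N.Edge a v) (hb : N.Edge b v)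
    (hab : a ≠ b) : N.IsRetic v := by
  have := two_le_indeg ha hb hab
  rcases hN.2.2.2.1 v (hN.1 _ ha).2 with h | h | h | h <;> first | exact h | (have := h.2.1; omega)

theorem IsNetwork.indeg_add_outdeg_le (hN : N.IsNetwork) (hv : v ∈ N.verts) :
    N.indeg v + N.outdeg v ≤ 3 := by
  rcases hN.2.2.2.1 v hv with h | h | h | h <;> (have := h.2.1; have := h.2.2; omega)

theorem IsTreeNode.adj (ht : N.IsTreeNode v) (hu : N.Edge u v) (ha : N.Edge v a)
    (hb : N.Edge v b) (hab : a ≠ b) (hz : N.Adj v z) : z = u ∨ z = a ∨ z = b := by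
  rcases hz with hz | hz
  · exact Or.inr (eq_or_eq_of_outdeg_eq_two ht.2.2 ha hb hab hz)
  · exact Or.inl (eq_of_indeg_eq_one ht.2.1 hz hu)

theorem IsRetic.adj (hr : N.IsRetic v) (ha : N.Edge a v) (hb : N.Edge b v) (hab : a ≠ b)
    (hc : N.Edge v c) (hz : N.Adj v z) : z = a ∨ z = b ∨ z = c := by
  rcases hz with hz | hz
  · exact Or.inr (Or.inr (eq_of_outdeg_eq_one hr.2.2 hz hc))
  · exact (eq_or_eq_of_indeg_eq_two hr.2.1 ha hb hab hz).imp_right Or.inl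

theorem IsLeaf.adj (hx : N.IsLeaf v) (hu : N.Edge u v) (hz : N.Adj v z) : z = u := by
  rcases hz with hz | hz
  · exact absurd hz hx.not_edge
  · exact eq_of_indeg_eq_one hx.2.1 hz hu

theorem IsNetwork.not_four_adj (hN : N.IsNetwork) {d : ℕ} (ha : N.Adj v a)
    (hb : N.Adj v b) (hc : N.Adj v c) (hd : N.Adj v d) (hab : a ≠ b) (hac : a ≠ c)
    (had : a ≠ d) (hbc : b ≠ c) (hbd : b ≠ d) (hcd : c ≠ d) : False := by
  set nbrs := (N.edges.filter fun e => e.1 = v).image Prod.snd ∪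
    (N.edges.filter fun e => e.2 = v).image Prod.fst
  have hmem : ∀ z, N.Adj v z → z ∈ nbrs := by
    rintro z (hz | hz)
    · exact Finset.mem_union_left _ (Finset.mem_image.2 ⟨_, Finset.mem_filter.2 ⟨hz, rfl⟩, rfl⟩)
    · exact Finset.mem_union_right _ (Finset.mem_image.2 ⟨_, Finset.mem_filter.2 ⟨hz, rfl⟩, rfl⟩)
  have hv : v ∈ N.verts := by
    rcases ha with h | h
    exacts [(hN.1 _ h).1, (hN.1 _ h).2]
  have hle : nbrs.card ≤ 3 := by
    refine (Finset.card_union_le _ _).trans ?_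
    have h1 := Finset.card_image_le (s := N.edges.filter fun e => e.1 = v) (f := Prod.snd)
    have h2 := Finset.card_image_le (s := N.edges.filter fun e => e.2 = v) (f := Prod.fst)
    have := hN.indeg_add_outdeg_le hv
    unfold outdeg indeg at this
    omega
  have h4 : ({a, b, c, d} : Finset ℕ).card = 4 := by
    rw [Finset.card_insert_of_notMem (by simp [hab, hac, had]),
      Finset.card_insert_of_notMem (by simp [hbc, hbd]),
      Finset.card_insert_of_notMem (by simp [hcd]), Finset.card_singleton]
  have hsub : ({a, b, c, d} : Finset ℕ) ⊆ nbrs := by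
    intro z hz
    simp only [Finset.mem_insert, Finset.mem_singleton] at hz
    rcases hz with rfl | rfl | rfl | rfl <;> exact hmem _ ‹_›
  have := Finset.card_le_card hsub
  omega

theorem IsNetwork.not_adj_self (hN : N.IsNetwork) (a : ℕ) : ¬ N.Adj a a :=
  fun h => h.elim (hN.not_edge_self a) (hN.not_edge_self a)

theorem ConnectedIn.mono (hST : S ⊆ T) (h : N.ConnectedIn S u v) : N.ConnectedIn T u v :=
  ReflTransGen.mono (fun _ _ h => ⟨hST h.1, hST h.2.1, h.2.2⟩) _ _ h

theorem ConnectedIn.symm (h : N.ConnectedIn S u v) : N.ConnectedIn S v u :=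
  ReflTransGen.mono (fun _ _ h => ⟨h.2.1, h.1, h.2.2.symm⟩) _ _ h.swap

theorem ConnectedIn.exists_adj (h : N.ConnectedIn S u v) (huv : u ≠ v) :
    ∃ z ∈ S, N.Adj u z := by
  rcases ReflTransGen.cases_head h with rfl | ⟨z, hz, -⟩
  · exact absurd rfl huv
  · exact ⟨z, hz.2.1, hz.2.2⟩

theorem BiconnectedSet.exists_two_adj (hN : N.IsNetwork) (hS : N.BiconnectedSet S)
    (hv : v ∈ S) : ∃ z₁ ∈ S, ∃ z₂ ∈ S, z₁ ≠ z₂ ∧ N.Adj v z₁ ∧ N.Adj v z₂ := by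
  obtain ⟨hcard, -, hconn, hcut⟩ := hS
  obtain ⟨c, hc, hcv⟩ := Finset.exists_mem_ne (by omega : 1 < S.card) v
  obtain ⟨z₁, hz₁, hadj₁⟩ := (hconn v hv c hc).exists_adj hcv.symm
  have hz₁v : z₁ ≠ v := fun h => hN.not_adj_self v (h ▸ hadj₁)
  obtain ⟨w, hw, hwv⟩ := Finset.exists_mem_ne
    (by rw [Finset.card_erase_of_mem hz₁]; omega : 1 < (S.erase z₁).card) v
  obtain ⟨z₂, hz₂, hadj₂⟩ :=
    (hcut z₁ hz₁ v (Finset.mem_erase.2 ⟨hz₁v.symm, hv⟩) w hw).exists_adj hwv.symm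
  exact ⟨z₁, hz₁, z₂, Finset.mem_of_mem_erase hz₂, (Finset.ne_of_mem_erase hz₂).symm,
    hadj₁, hadj₂⟩

theorem IsLeaf.not_mem_of_biconnectedSet (hN : N.IsNetwork) (hx : N.IsLeaf v)
    (hS : N.BiconnectedSet S) : v ∉ S := by
  intro hv
  obtain ⟨u, hu⟩ := exists_edge_of_indeg_pos (by rw [hx.2.1]; omega : 0 < N.indeg v)
  obtain ⟨z₁, -, z₂, -, hne, h₁, h₂⟩ := hS.exists_two_adj hN hv
  exact hne ((hx.adj hu h₁).trans (hx.adj hu h₂).symm)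

theorem BiconnectedSet.mem_of_adj_eq (hN : N.IsNetwork) (hS : N.BiconnectedSet S)
    (hv : v ∈ S) (hadj : ∀ z, N.Adj v z → z = a ∨ z = b ∨ z = c) (hc : c ∉ S) : a ∈ S := by
  obtain ⟨z₁, hz₁, z₂, hz₂, hne, h₁, h₂⟩ := hS.exists_two_adj hN hv
  rcases hadj z₁ h₁ with rfl | rfl | rfl <;> rcases hadj z₂ h₂ with rfl | rfl | rfl <;>
    first | assumption | exact absurd rfl hne | exact absurd ‹_› hc

theorem BiconnectedSet.union (hS : N.BiconnectedSet S) (hT : N.BiconnectedSet T)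
    (h₁S : u ∈ S) (h₁T : u ∈ T) (h₂S : v ∈ S) (h₂T : v ∈ T) (huv : u ≠ v) :
    N.BiconnectedSet (S ∪ T) := by
  obtain ⟨cardS, subS, connS, cutS⟩ := hS
  obtain ⟨cardT, subT, connT, cutT⟩ := hT
  refine ⟨cardS.trans (Finset.card_le_card Finset.subset_union_left),
    Finset.union_subset subS subT, ?_, ?_⟩
  · have hto : ∀ z ∈ S ∪ T, N.ConnectedIn (S ∪ T) z u := by
      intro z hz
      rcases Finset.mem_union.1 hz with h | h
      · exact (connS z h u h₁S).mono Finset.subset_union_left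
      · exact (connT z h u h₁T).mono Finset.subset_union_right
    exact fun z hz z' hz' => (hto z hz).trans (hto z' hz').symm
  · intro c hc
    obtain ⟨d, hdS, hdT, hdc⟩ : ∃ d ∈ S, d ∈ T ∧ d ≠ c := by
      by_cases h : c = u
      · exact ⟨v, h₂S, h₂T, fun h' => huv (h ▸ h'.symm)⟩
      · exact ⟨u, h₁S, h₁T, Ne.symm h⟩
    have hpiece : ∀ {R : Finset ℕ}, N.BiconnectedSet R → R ⊆ S ∪ T → d ∈ R →
        ∀ z ∈ R, z ≠ c → N.ConnectedIn ((S ∪ T).erase c) z d := by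
      intro R hR hRST hdR z hz hzc
      by_cases hcR : c ∈ R
      · exact (hR.2.2.2 c hcR z (Finset.mem_erase.2 ⟨hzc, hz⟩) d
          (Finset.mem_erase.2 ⟨hdc, hdR⟩)).mono (Finset.erase_subset_erase c hRST)
      · refine (hR.2.2.1 z hz d hdR).mono fun x hx => Finset.mem_erase.2 ⟨?_, hRST hx⟩
        rintro rfl
        exact hcR hx
    have hto : ∀ z ∈ (S ∪ T).erase c, N.ConnectedIn ((S ∪ T).erase c) z d := by
      intro z hz
      obtain ⟨hzc, hz⟩ := Finset.mem_erase.1 hz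
      rcases Finset.mem_union.1 hz with h | h
      · exact hpiece ⟨cardS, subS, connS, cutS⟩ Finset.subset_union_left hdS z h hzc
      · exact hpiece ⟨cardT, subT, connT, cutT⟩ Finset.subset_union_right hdT z h hzc
    exact fun z hz z' hz' => (hto z hz).trans (hto z' hz').symm

/-- `S` and `T` each contain two neighbours of `w`, and `w` has at most three. -/
theorem BiconnectedSet.exists_ne_mem_inter (hN : N.IsNetwork) (hS : N.BiconnectedSet S)
    (hT : N.BiconnectedSet T) (hwS : w ∈ S) (hwT : w ∈ T) : ∃ w' ∈ S, w' ∈ T ∧ w' ≠ w := by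
  obtain ⟨s₁, hs₁, s₂, hs₂, hs, hws₁, hws₂⟩ := hS.exists_two_adj hN hwS
  obtain ⟨t₁, ht₁, t₂, ht₂, ht, hwt₁, hwt₂⟩ := hT.exists_two_adj hN hwT
  have hne : ∀ {z}, N.Adj w z → z ≠ w := fun h hz => hN.not_adj_self w (hz ▸ h)
  by_cases h₁₁ : s₁ = t₁
  · exact ⟨s₁, hs₁, h₁₁ ▸ ht₁, hne hws₁⟩
  by_cases h₁₂ : s₁ = t₂
  · exact ⟨s₁, hs₁, h₁₂ ▸ ht₂, hne hws₁⟩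
  by_cases h₂₁ : s₂ = t₁
  · exact ⟨s₂, hs₂, h₂₁ ▸ ht₁, hne hws₂⟩
  by_cases h₂₂ : s₂ = t₂
  · exact ⟨s₂, hs₂, h₂₂ ▸ ht₂, hne hws₂⟩
  exact (hN.not_four_adj hws₁ hws₂ hwt₁ hwt₂ hs h₁₁ h₁₂ h₂₁ h₂₂ ht).elim

theorem BlobSet.eq_of_mem (hN : N.IsNetwork) (hS : N.BlobSet S) (hT : N.BlobSet T)
    (hwS : w ∈ S) (hwT : w ∈ T) : S = T := by
  obtain ⟨w', hw'S, hw'T, hw'⟩ := hS.1.exists_ne_mem_inter hN hT.1 hwS hwT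
  have hU := hS.1.union hT.1 hwS hwT hw'S hw'T hw'.symm
  exact (hS.2 _ hU Finset.subset_union_left).trans
    (hT.2 _ hU Finset.subset_union_right).symm

def InDistinctBlobs (N : Net α) (E : Finset (ℕ × ℕ)) : Prop :=
  ∀ e ∈ E, ∃ S, N.BlobSet S ∧ e.1 ∈ S ∧ e.2 ∈ S ∧ ∀ f ∈ E, f.2 ∈ S → f = e

theorem IsNetwork.inDistinctBlobs {k : ℕ} (hN : N.IsNetwork)
    (huniq : ∀ S, N.BlobSet S → N.reticCount S = k → ∃! e, e ∈ E ∧ e.1 ∈ S ∧ e.2 ∈ S)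
    (hblob : ∀ e ∈ E, ∃ S, N.BlobSet S ∧ N.reticCount S = k ∧ e.1 ∈ S ∧ e.2 ∈ S) :
    N.InDistinctBlobs E := by
  intro e he
  obtain ⟨S, hS, hSk, he₁, he₂⟩ := hblob e he
  refine ⟨S, hS, he₁, he₂, fun f hf hf₂ => ?_⟩
  obtain ⟨S', hS', -, hf₁', hf₂'⟩ := hblob f hf
  obtain rfl := hS'.eq_of_mem hN hS hf₂' hf₂
  exact (huniq S' hS' hSk).unique ⟨hf, hf₁', hf₂'⟩ ⟨he, he₁, he₂⟩

theorem InDistinctBlobs.eq_of_mem (hsep : N.InDistinctBlobs E) (hN : N.IsNetwork) (hf : f ∈ E)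
    (hg : g ∈ E) (hS : N.BlobSet S) (hT : N.BlobSet T) (hfS : f.2 ∈ S) (hgT : g.2 ∈ T)
    (hwS : w ∈ S) (hwT : w ∈ T) : f = g := by
  obtain ⟨S', hS', -, hf₂, hun⟩ := hsep f hf
  obtain rfl := hS'.eq_of_mem hN hS hf₂ hfS
  obtain rfl := hS'.eq_of_mem hN hT hwS hwT
  exact (hun g hg hgT).symm

def EdgeFrom (G : Net α) (D : Finset ℕ) (z z' : ℕ) : Prop := z ∈ D ∧ G.Edge z z'

/-- `a` reaches `b` by a directed path of `G` of positive length whose interior lies in `D`. -/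
def PathVia (G : Net α) (D : Finset ℕ) (a b : ℕ) : Prop :=
  ∃ c, G.Edge a c ∧ ReflTransGen (G.EdgeFrom D) c b

/-- Suppress the vertices of `D`, joining the remaining vertices along paths through `D`. -/
def contract (G : Net α) (D : Finset ℕ) : Net α :=
  ⟨G.verts \ D,
    (G.verts ×ˢ G.verts).filter fun e => e.1 ∉ D ∧ e.2 ∉ D ∧ G.PathVia D e.1 e.2, G.lab⟩

theorem edge_contract : (G.contract D).Edge a b ↔
    (a ∈ G.verts ∧ b ∈ G.verts) ∧ a ∉ D ∧ b ∉ D ∧ G.PathVia D a b := by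
  rw [contract, Edge, Finset.mem_filter, Finset.mem_product]

theorem PathVia.of_edge (h : G.Edge a b) : G.PathVia D a b := ⟨b, h, .refl⟩

theorem PathVia.mono {D' : Finset ℕ} (h : G.PathVia D a b) (hD : D ⊆ D') : G.PathVia D' a b :=
  let ⟨c, hac, hcb⟩ := h
  ⟨c, hac, ReflTransGen.mono (fun _ _ h => ⟨hD h.1, h.2⟩) _ _ hcb⟩

theorem PathVia.transGen (h : G.PathVia D a b) : TransGen G.Edge a b :=
  let ⟨_, hac, hcb⟩ := h
  TransGen.head' hac (ReflTransGen.mono (fun _ _ h => h.2) _ _ hcb)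

theorem PathVia.exists_last (h : G.PathVia D a b) : ∃ z, (z = a ∨ z ∈ D) ∧ G.Edge z b := by
  obtain ⟨c, hac, hcb⟩ := h
  rcases hcb.cases_tail with rfl | ⟨z, -, hz, hzb⟩
  exacts [⟨a, Or.inl rfl, hac⟩, ⟨z, Or.inr hz, hzb⟩]

theorem contract_empty (hG : ∀ e ∈ G.edges, e.1 ∈ G.verts ∧ e.2 ∈ G.verts) :
    G.contract ∅ = G := by
  obtain ⟨V, Es, lab⟩ := G
  simp only [contract, Finset.sdiff_empty, Finset.notMem_empty, not_false_eq_true, true_and,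
    mk.injEq, and_true]
  ext ⟨a, b⟩
  simp only [Finset.mem_filter, Finset.mem_product]
  refine ⟨fun ⟨_, c, hac, hcb⟩ => ?_, fun h => ⟨hG _ h, .of_edge h⟩⟩
  rcases hcb.cases_head with rfl | ⟨_, ⟨h, -⟩, -⟩
  exacts [hac, absurd h (Finset.notMem_empty _)]

theorem reflTransGen_edgeFrom_insert (h : ReflTransGen (G.EdgeFrom (insert v D)) c b) :
    ReflTransGen (G.EdgeFrom D) c b ∨ ReflTransGen (G.EdgeFrom D) c v ∧ G.PathVia D v b := by
  induction h using ReflTransGen.head_induction_on with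
  | refl => exact Or.inl .refl
  | @head x x' hxx' _ ih =>
    obtain ⟨hx, hxx'⟩ := hxx'
    rcases Finset.mem_insert.1 hx with rfl | hx
    · refine Or.inr ⟨.refl, ?_⟩
      rcases ih with ih | ⟨-, ih⟩
      exacts [⟨x', hxx', ih⟩, ih]
    · exact ih.imp (ReflTransGen.head ⟨hx, hxx'⟩) (And.imp_left (ReflTransGen.head ⟨hx, hxx'⟩))

/-- The left-hand side is the result of `CleanStep.suppress` at `v`. -/
theorem contract_suppress (hG : ∀ a, ¬ TransGen G.Edge a a)
    (hu : (G.contract D).Edge u v) (hw : (G.contract D).Edge v w)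
    (h1 : (G.contract D).indeg v = 1) (h2 : (G.contract D).outdeg v = 1) :
    (⟨(G.contract D).verts.erase v, insert (u, w) ((G.contract D).edges.filter
        fun e => e.1 ≠ v ∧ e.2 ≠ v), (G.contract D).lab⟩ : Net α) = G.contract (insert v D) := by
  obtain ⟨⟨huG, hvG⟩, huD, hvD, huv⟩ := edge_contract.1 hu
  obtain ⟨⟨-, hwG⟩, -, hwD, hvw⟩ := edge_contract.1 hw
  have hu_ne : u ≠ v := fun h => hG u (h ▸ huv.transGen)
  have hw_ne : w ≠ v := fun h => hG v (h ▸ hvw.transGen)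
  simp only [contract, mk.injEq, and_true]
  constructor
  · ext z
    simp only [Finset.mem_erase, Finset.mem_sdiff, Finset.mem_insert]
    tauto
  ext ⟨a, b⟩
  simp only [Finset.mem_insert, Finset.mem_filter, Prod.mk.injEq, not_or]
  constructor
  · rintro (⟨rfl, rfl⟩ | ⟨⟨hab, haD, hbD, hp⟩, hav, hbv⟩)
    · obtain ⟨c, hac, hcv⟩ := huv
      obtain ⟨c', hvc', hc'b⟩ := hvw
      refine ⟨Finset.mem_product.2 ⟨huG, hwG⟩, ⟨hu_ne, huD⟩, ⟨hw_ne, hwD⟩, c, hac, ?_⟩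
      have hsub : D ⊆ insert v D := Finset.subset_insert _ _
      exact (ReflTransGen.mono (fun _ _ h => ⟨hsub h.1, h.2⟩) _ _ hcv).trans <|
        ReflTransGen.head ⟨Finset.mem_insert_self _ _, hvc'⟩
          (ReflTransGen.mono (fun _ _ h => ⟨hsub h.1, h.2⟩) _ _ hc'b)
    · exact ⟨hab, ⟨hav, haD⟩, ⟨hbv, hbD⟩, hp.mono (Finset.subset_insert _ _)⟩
  · rintro ⟨hab, ⟨hav, haD⟩, ⟨hbv, hbD⟩, c, hac, hcb⟩
    rcases reflTransGen_edgeFrom_insert hcb with hcb | ⟨hcv, hvb⟩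
    · exact Or.inr ⟨⟨hab, haD, hbD, c, hac, hcb⟩, hav, hbv⟩
    · have hav' : (G.contract D).Edge a v :=
        edge_contract.2 ⟨⟨(Finset.mem_product.1 hab).1, hvG⟩, haD, hvD, c, hac, hcv⟩
      have hvb' : (G.contract D).Edge v b :=
        edge_contract.2 ⟨⟨hvG, (Finset.mem_product.1 hab).2⟩, hvD, hbD, hvb⟩
      exact Or.inl ⟨eq_of_indeg_eq_one h1 hav' hu, eq_of_outdeg_eq_one h2 hvb' hw⟩

theorem wellFoundedOn_transGen_swap (hG : ∀ a, ¬ TransGen G.Edge a a) :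
    (G.verts : Set ℕ).WellFoundedOn (fun a b => TransGen G.Edge b a) :=
  haveI : IsStrictOrder ℕ (fun a b => TransGen G.Edge b a) :=
    { irrefl := hG, trans := fun _ _ _ h₁ h₂ => h₂.trans h₁ }
  G.verts.finite_toSet.wellFoundedOn

theorem exists_reflTransGen_edgeFrom (hverts : ∀ e ∈ G.edges, e.1 ∈ G.verts ∧ e.2 ∈ G.verts)
    (hG : ∀ a, ¬ TransGen G.Edge a a) (hD : ∀ z ∈ D, ∃ z', G.Edge z z') (hc : c ∈ G.verts) :
    ∃ t ∈ G.verts, t ∉ D ∧ ReflTransGen (G.EdgeFrom D) c t := by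
  refine (wellFoundedOn_transGen_swap hG).induction hc
    (P := fun c => ∃ t ∈ G.verts, t ∉ D ∧ ReflTransGen (G.EdgeFrom D) c t) ?_
  intro c hc ih
  by_cases hcD : c ∈ D
  · obtain ⟨c', hcc'⟩ := hD c hcD
    obtain ⟨t, ht, htD, hc't⟩ := ih c' (hverts _ hcc').2 (.single hcc')
    exact ⟨t, ht, htD, .head ⟨hcD, hcc'⟩ hc't⟩
  · exact ⟨c, hc, hcD, .refl⟩

theorem eq_of_reflTransGen_edgeFrom
    (hmerge : ∀ z ∈ D, ∀ z' t, G.Edge z t → G.Edge z' t → z' = z)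
    (hv : v ∉ D) (ha : G.Edge v a) (hb : G.Edge v b) (hac : ReflTransGen (G.EdgeFrom D) a c)
    (hbc : ReflTransGen (G.EdgeFrom D) b c) : a = b := by
  have hunique : Relator.RightUnique (Function.swap (G.EdgeFrom D)) :=
    fun _ _ _ h h' => hmerge _ h'.1 _ _ h'.2 h.2
  have hchild : ∀ {a b}, G.Edge v b → ReflTransGen (G.EdgeFrom D) a b → a = b := by
    intro a b hb hab
    rcases hab.cases_tail with rfl | ⟨z, -, hz, hzb⟩
    · rfl
    · exact absurd (hmerge z hz v b hzb hb ▸ hz) hv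
  rcases ReflTransGen.total_of_right_unique hunique (reflTransGen_swap.2 hac)
    (reflTransGen_swap.2 hbc) with h | h
  · exact (hchild ha (reflTransGen_swap.1 h)).symm
  · exact hchild hb (reflTransGen_swap.1 h)

def IsEndpoint (E : Finset (ℕ × ℕ)) (z : ℕ) : Prop := ∃ e ∈ E, z = e.1 ∨ z = e.2

theorem IsNetwork.not_transGen_deleteEdges (hN : N.IsNetwork) (a : ℕ) :
    ¬ TransGen (N.deleteEdges E).Edge a a :=
  fun h => hN.not_transGen_self a (TransGen.mono (fun _ _ h => h.of_deleteEdges) _ _ h)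

theorem TreeChild.not_isRetic_of_outdeg_eq_one (hN : N.TreeChild) (h : N.outdeg v = 1)
    (hc : N.Edge v c) : ¬ N.IsRetic c := by
  obtain ⟨c', hc', htl⟩ := hN.2 v (hN.1.1 _ hc).1 fun hl => by have := hl.2.2; omega
  rw [eq_of_outdeg_eq_one h hc hc']
  exact fun hr => htl.elim hr.not_isTreeNode hr.not_isLeaf

theorem TreeChild.isTreeNode_of_isReticEdge (hN : N.TreeChild) (he : N.IsReticEdge e) :
    N.IsTreeNode e.1 := by
  rcases hN.1.2.2.2.1 _ (hN.1.1 e he.1).1 with h | h | h | h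
  · exact absurd he.2 (hN.not_isRetic_of_outdeg_eq_one h.2.2 he.1)
  · exact absurd he.1 h.not_edge
  · exact h
  · exact absurd he.2 (hN.not_isRetic_of_outdeg_eq_one h.2.2 he.1)

theorem TreeChild.exists_edge_deleteEdges (hN : N.TreeChild) (hE : ∀ e ∈ E, N.IsReticEdge e)
    (hv : v ∈ N.verts) (hnl : ¬ N.IsLeaf v) : ∃ c, (N.deleteEdges E).Edge v c ∧ ¬ N.IsRetic c := by
  obtain ⟨c, hc, htl⟩ := hN.2 v hv hnl
  have hcr : ¬ N.IsRetic c := fun hr => htl.elim hr.not_isTreeNode hr.not_isLeaf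
  exact ⟨c, edge_deleteEdges.2 ⟨hc, fun hcE => hcr (hE _ hcE).2⟩, hcr⟩

theorem TreeChild.not_isRetic_of_edge_deleteEdges (hN : N.TreeChild)
    (hE : ∀ e ∈ E, N.IsReticEdge e) (hz : IsEndpoint E z) (h : (N.deleteEdges E).Edge z t) :
    ¬ N.IsRetic t := by
  obtain ⟨hzt, hztE⟩ := edge_deleteEdges.1 h
  obtain ⟨e, he, rfl | rfl⟩ := hz
  · have htree := hN.isTreeNode_of_isReticEdge (hE e he)
    obtain ⟨c, hc, hcr⟩ := hN.exists_edge_deleteEdges hE htree.1 htree.not_isLeaf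
    rcases eq_or_eq_of_outdeg_eq_two htree.2.2 (hE e he).1 hc.of_deleteEdges
      (fun h => hcr (h ▸ (hE e he).2)) hzt with rfl | rfl
    · exact absurd he hztE
    · exact hcr
  · exact hN.not_isRetic_of_outdeg_eq_one (hE e he).2.2.2 hzt

theorem TreeChild.eq_of_edge_deleteEdges (hN : N.TreeChild) (hE : ∀ e ∈ E, N.IsReticEdge e)
    (hz : IsEndpoint E z) (h : (N.deleteEdges E).Edge z t) (h' : (N.deleteEdges E).Edge u t) :
    u = z := by
  by_contra hne
  exact hN.not_isRetic_of_edge_deleteEdges hE hz h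
    (hN.1.isRetic_of_edge h'.of_deleteEdges h.of_deleteEdges hne)

theorem TreeChild.exists_edge_contract (hN : N.TreeChild) (hE : ∀ e ∈ E, N.IsReticEdge e)
    (hD : ∀ z ∈ D, IsEndpoint E z) (hv : v ∈ N.verts) (hvD : v ∉ D)
    (hc : (N.deleteEdges E).Edge v c) :
    ∃ t, ((N.deleteEdges E).contract D).Edge v t ∧
      ReflTransGen ((N.deleteEdges E).EdgeFrom D) c t := by
  have hD' : ∀ z ∈ D, ∃ z', (N.deleteEdges E).Edge z z' := by
    intro z hz
    obtain ⟨e, he, rfl | rfl⟩ := hD z hz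
    · have htree := hN.isTreeNode_of_isReticEdge (hE e he)
      exact (hN.exists_edge_deleteEdges hE htree.1 htree.not_isLeaf).imp fun _ h => h.1
    · exact (hN.exists_edge_deleteEdges hE (hE e he).2.1 (hE e he).2.not_isLeaf).imp
        fun _ h => h.1
  obtain ⟨t, ht, htD, hct⟩ := exists_reflTransGen_edgeFrom (G := N.deleteEdges E)
    (fun e he => hN.1.1 e (Finset.mem_sdiff.1 he).1) hN.1.not_transGen_deleteEdges hD'
    (hN.1.1 _ hc.of_deleteEdges).2
  exact ⟨t, edge_contract.2 ⟨⟨hv, ht⟩, hvD, htD, c, hc, hct⟩, hct⟩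

/-- The two children of `v` lead through `D` to distinct vertices of the contraction. -/
theorem TreeChild.two_le_outdeg_contract (hN : N.TreeChild) (hE : ∀ e ∈ E, N.IsReticEdge e)
    (hD : ∀ z ∈ D, IsEndpoint E z) (hv : N.IsTreeNode v) (hvD : v ∉ D) (hvE : ¬ IsEndpoint E v) :
    2 ≤ ((N.deleteEdges E).contract D).outdeg v := by
  obtain ⟨a, ha⟩ := exists_edge_of_outdeg_pos (by rw [hv.2.2]; omega)
  obtain ⟨b, hba, hb⟩ := exists_edge_ne_of_outdeg_eq_two hv.2.2 a
  have hG : ∀ {x}, N.Edge v x → (N.deleteEdges E).Edge v x := fun hx =>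
    edge_deleteEdges.2 ⟨hx, fun hxE => hvE ⟨_, hxE, Or.inl rfl⟩⟩
  obtain ⟨t₁, ht₁, hat₁⟩ := hN.exists_edge_contract hE hD hv.1 hvD (hG ha)
  obtain ⟨t₂, ht₂, hbt₂⟩ := hN.exists_edge_contract hE hD hv.1 hvD (hG hb)
  refine two_le_outdeg ht₁ ht₂ ?_
  rintro rfl
  exact hba (eq_of_reflTransGen_edgeFrom
    (fun z hz _ _ h h' => hN.eq_of_edge_deleteEdges hE (hD z hz) h h') hvD (hG hb) (hG ha)
    hbt₂ hat₁)

theorem TreeChild.two_le_indeg_contract (hN : N.TreeChild) (hE : ∀ e ∈ E, N.IsReticEdge e)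
    (hD : ∀ z ∈ D, IsEndpoint E z) (hv : N.IsRetic v) (hvD : v ∉ D) (hvE : ¬ IsEndpoint E v) :
    2 ≤ ((N.deleteEdges E).contract D).indeg v := by
  obtain ⟨a, ha⟩ := exists_edge_of_indeg_pos (by rw [hv.2.1]; omega)
  obtain ⟨b, hba, hb⟩ := exists_edge_ne_of_indeg_eq_two hv.2.1 a
  have hG : ∀ {x}, N.Edge x v → ((N.deleteEdges E).contract D).Edge x v := by
    intro x hx
    have hx' : (N.deleteEdges E).Edge x v :=
      edge_deleteEdges.2 ⟨hx, fun hxE => hvE ⟨_, hxE, Or.inr rfl⟩⟩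
    refine edge_contract.2 ⟨⟨(hN.1.1 _ hx).1, hv.1⟩, fun hxD => ?_, hvD, .of_edge hx'⟩
    exact hN.not_isRetic_of_edge_deleteEdges hE (hD x hxD) hx' hv
  exact two_le_indeg (hG hb) (hG ha) hba

theorem TreeChild.isEndpoint_of_contract (hN : N.TreeChild) (hE : ∀ e ∈ E, N.IsReticEdge e)
    (hD : ∀ z ∈ D, IsEndpoint E z) (h1 : ((N.deleteEdges E).contract D).indeg v = 1)
    (h2 : ((N.deleteEdges E).contract D).outdeg v = 1) : IsEndpoint E v := by
  obtain ⟨u, hu⟩ := exists_edge_of_indeg_pos (by rw [h1]; omega)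
  obtain ⟨w, hw⟩ := exists_edge_of_outdeg_pos (by rw [h2]; omega)
  obtain ⟨⟨-, hv⟩, -, hvD, huv⟩ := edge_contract.1 hu
  obtain ⟨-, -, -, c, hvc, -⟩ := edge_contract.1 hw
  by_contra hvE
  rcases hN.1.2.2.2.1 v hv with h | h | h | h
  · obtain ⟨z, -, hzv⟩ := huv.exists_last
    have := indeg_pos hzv.of_deleteEdges
    have := h.2.1
    omega
  · exact h.not_edge hvc.of_deleteEdges
  · have := hN.two_le_outdeg_contract hE hD h hvD hvE
    omega
  · have := hN.two_le_indeg_contract hE hD h hvD hvE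
    omega

theorem TreeChild.exists_eq_contract_insert_of_cleanStep (hN : N.TreeChild)
    (hE : ∀ e ∈ E, N.IsReticEdge e) (hD : ∀ z ∈ D, IsEndpoint E z)
    (hs : CleanStep ((N.deleteEdges E).contract D) M) :
    ∃ v, IsEndpoint E v ∧ M = (N.deleteEdges E).contract (insert v D) := by
  cases hs with
  | delNode v hv _ hlab =>
    obtain ⟨hvN, hvD⟩ := Finset.mem_sdiff.1 hv
    have hnl : ¬ N.IsLeaf v := fun hl => by
      obtain ⟨x, hx⟩ := (hN.1.2.2.2.2.1 v).2 hl
      exact absurd (hx.symm.trans hlab) (Option.some_ne_none x)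
    obtain ⟨c, hvc, -⟩ := hN.exists_edge_deleteEdges hE hvN hnl
    obtain ⟨t, hvt, -⟩ := hN.exists_edge_contract hE hD hvN hvD hvc
    have := outdeg_pos hvt
    omega
  | suppress u v w h1 h2 hu hw =>
    exact ⟨v, hN.isEndpoint_of_contract hE hD h1 h2,
      contract_suppress hN.1.not_transGen_deleteEdges hu hw h1 h2⟩

theorem TreeChild.exists_eq_contract_of_cleanUp (hN : N.TreeChild)
    (hE : ∀ e ∈ E, N.IsReticEdge e) (h : ReflTransGen CleanStep (N.deleteEdges E) M) :
    ∃ D : Finset ℕ, M = (N.deleteEdges E).contract D ∧ ∀ z ∈ D, IsEndpoint E z := by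
  induction h with
  | refl =>
    exact ⟨∅, (contract_empty (G := N.deleteEdges E)
      fun e he => hN.1.1 e (Finset.mem_sdiff.1 he).1).symm, by simp⟩
  | tail _ hs ih =>
    obtain ⟨D, rfl, hD⟩ := ih
    obtain ⟨v, hv, rfl⟩ := hN.exists_eq_contract_insert_of_cleanStep hE hD hs
    refine ⟨insert v D, rfl, fun z hz => ?_⟩
    rcases Finset.mem_insert.1 hz with rfl | hz
    exacts [hv, hD z hz]

/-- The endpoint needs two neighbours in `S`, and its leaf child is not one of them. -/
theorem TreeChild.parent_mem_of_edge_leaf (hN : N.TreeChild) (hE : ∀ e ∈ E, N.IsReticEdge e)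
    (hf : f ∈ E) (hS : N.BiconnectedSet S) (hf₁ : f.1 ∈ S) (hf₂ : f.2 ∈ S)
    (hc : c = f.1 ∨ c = f.2) (hpc : (N.deleteEdges E).Edge p c) (hcx : N.Edge c x)
    (hx : N.IsLeaf x) : p ∈ S := by
  have hxS := hx.not_mem_of_biconnectedSet hN.1 hS
  obtain ⟨hpc, hpcE⟩ := edge_deleteEdges.1 hpc
  rcases hc with rfl | rfl
  · have htree := hN.isTreeNode_of_isReticEdge (hE f hf)
    have hne : f.2 ≠ x := fun h => (hE f hf).2.not_isLeaf (h ▸ hx)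
    exact hS.mem_of_adj_eq hN.1 hf₁ (fun z hz => htree.adj hpc (hE f hf).1 hcx hne hz) hxS
  · have hne : p ≠ f.1 := by
      rintro rfl
      exact hpcE hf
    exact hS.mem_of_adj_eq hN.1 hf₂ (fun z hz => (hE f hf).2.adj hpc (hE f hf).1 hne hcx hz) hxS

/-- Otherwise `q`, an endpoint of some `f ∈ E`, lies in the blob of `f` and, as the parent of
`z`, in the blob of the edge of `E` at `z`; the two edges then coincide, which is absurd. -/
theorem TreeChild.parent_not_mem_of_edge_leaf (hN : N.TreeChild) (hE : ∀ e ∈ E, N.IsReticEdge e)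
    (hsep : N.InDistinctBlobs E) (hD : ∀ z ∈ D, IsEndpoint E z) (hx : N.IsLeaf x) (hzD : z ∈ D)
    (hzx : (N.deleteEdges E).Edge z x) (hqz : (N.deleteEdges E).Edge q z) : q ∉ D := by
  intro hqD
  obtain ⟨g, hg, hzg⟩ := hD z hzD
  obtain ⟨f, hf, hqf⟩ := hD q hqD
  obtain rfl : z = g.1 := hzg.resolve_right fun h =>
    hN.not_isRetic_of_edge_deleteEdges hE (hD q hqD) hqz (h ▸ (hE g hg).2)
  obtain ⟨Sf, hSf, hf₁, hf₂, -⟩ := hsep f hf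
  obtain ⟨Sg, hSg, hg₁, hg₂, -⟩ := hsep g hg
  have hqSg := hN.parent_mem_of_edge_leaf hE hg hSg.1 hg₁ hg₂ (Or.inl rfl) hqz
    hzx.of_deleteEdges hx
  have hqSf : q ∈ Sf := by rcases hqf with rfl | rfl <;> assumption
  obtain rfl := hsep.eq_of_mem hN.1 hf hg hSf hSg hf₂ hg₂ hqSf hqSg
  rcases hqf with rfl | rfl
  · exact hN.1.not_edge_self _ hqz.of_deleteEdges
  · exact hN.1.2.1 _ _ (hE f hf).1 (.single hqz.of_deleteEdges)

theorem TreeChild.exists_edge_of_pathVia_leaf (hN : N.TreeChild) (hE : ∀ e ∈ E, N.IsReticEdge e)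
    (hsep : N.InDistinctBlobs E) (hD : ∀ z ∈ D, IsEndpoint E z) (hx : N.IsLeaf x)
    (h : (N.deleteEdges E).PathVia D p x) :
    ∃ c, (N.deleteEdges E).Edge p c ∧ (c = x ∨ c ∈ D ∧ (N.deleteEdges E).Edge c x) := by
  obtain ⟨c, hpc, hcx⟩ := h
  refine ⟨c, hpc, ?_⟩
  rcases hcx.cases_tail with rfl | ⟨z, hcz, hzD, hzx⟩
  · exact Or.inl rfl
  rcases hcz.cases_tail with rfl | ⟨q, -, hqD, hqz⟩
  · exact Or.inr ⟨hzD, hzx⟩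
  · exact absurd hqD (hN.parent_not_mem_of_edge_leaf hE hsep hD hx hzD hzx hqz)

theorem four_le_length_add_length (hd : ∀ l, N.IsUpDownPath x y l → 5 ≤ l.length)
    (hP : (a :: P).IsChain N.Edge) (hQ : (a :: Q).IsChain N.Edge)
    (hx : (a :: P).getLast? = some x) (hy : (a :: Q).getLast? = some y) :
    4 ≤ P.length + Q.length := by
  have := hd _ ⟨a :: P, a :: Q, ⟨List.cons_ne_nil _ _, hP⟩, ⟨List.cons_ne_nil _ _, hQ⟩, rfl, hx, hy,
    rfl⟩
  simp at this
  omega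

theorem TreeChild.not_pathVia_cherry (hN : N.TreeChild) (hE : ∀ e ∈ E, N.IsReticEdge e)
    (hsep : N.InDistinctBlobs E) (hD : ∀ z ∈ D, IsEndpoint E z) (hx : N.IsLeaf x)
    (hy : N.IsLeaf y) (hd : ∀ l, N.IsUpDownPath x y l → 5 ≤ l.length)
    (hpx : (N.deleteEdges E).PathVia D p x) (hpy : (N.deleteEdges E).PathVia D p y) : False := by
  obtain ⟨c₁, hpc₁, rfl | ⟨hc₁D, hc₁x⟩⟩ := hN.exists_edge_of_pathVia_leaf hE hsep hD hx hpx <;>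
  obtain ⟨c₂, hpc₂, rfl | ⟨hc₂D, hc₂y⟩⟩ := hN.exists_edge_of_pathVia_leaf hE hsep hD hy hpy
  · have := four_le_length_add_length hd (a := p) (P := [c₁]) (Q := [c₂])
      (by simp [hpc₁.of_deleteEdges]) (by simp [hpc₂.of_deleteEdges]) rfl rfl
    simp at this
  · have := four_le_length_add_length hd (a := p) (P := [c₁]) (Q := [c₂, y])
      (by simp [hpc₁.of_deleteEdges]) (by simp [hpc₂.of_deleteEdges, hc₂y.of_deleteEdges])
      rfl rfl
    simp at this
  · have := four_le_length_add_length hd (a := p) (P := [c₁, x]) (Q := [c₂])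
      (by simp [hpc₁.of_deleteEdges, hc₁x.of_deleteEdges]) (by simp [hpc₂.of_deleteEdges])
      rfl rfl
    simp at this
  obtain ⟨f, hf, hc₁f⟩ := hD c₁ hc₁D
  obtain ⟨g, hg, hc₂g⟩ := hD c₂ hc₂D
  obtain ⟨Sf, hSf, hf₁, hf₂, -⟩ := hsep f hf
  obtain ⟨Sg, hSg, hg₁, hg₂, -⟩ := hsep g hg
  obtain rfl := hsep.eq_of_mem hN.1 hf hg hSf hSg hf₂ hg₂
    (hN.parent_mem_of_edge_leaf hE hf hSf.1 hf₁ hf₂ hc₁f hpc₁ hc₁x.of_deleteEdges hx)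
    (hN.parent_mem_of_edge_leaf hE hg hSg.1 hg₁ hg₂ hc₂g hpc₂ hc₂y.of_deleteEdges hy)
  have hf' : N.Edge f.1 f.2 := (hE f hf).1
  rcases hc₁f with rfl | rfl <;> rcases hc₂g with rfl | rfl
  · have := four_le_length_add_length hd (a := f.1) (P := [x]) (Q := [y])
      (by simp [hc₁x.of_deleteEdges]) (by simp [hc₂y.of_deleteEdges]) rfl rfl
    simp at this
  · have := four_le_length_add_length hd (a := f.1) (P := [x]) (Q := [f.2, y])
      (by simp [hc₁x.of_deleteEdges]) (by simp [hf', hc₂y.of_deleteEdges]) rfl rfl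
    simp at this
  · have := four_le_length_add_length hd (a := f.1) (P := [f.2, x]) (Q := [y])
      (by simp [hf', hc₁x.of_deleteEdges]) (by simp [hc₂y.of_deleteEdges]) rfl rfl
    simp at this
  · have := four_le_length_add_length hd (a := f.2) (P := [x]) (Q := [y])
      (by simp [hc₁x.of_deleteEdges]) (by simp [hc₂y.of_deleteEdges]) rfl rfl
    simp at this

end Net

theorem pi_implies_no_cherry_in_MLLS_general {X : Type} (N : Net X) (hN : N.TreeChild)
    (k : ℕ)
    (x y : ℕ) (hx : N.IsLeaf x) (hy : N.IsLeaf y)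
    (hd : ∀ l, N.IsUpDownPath x y l → 5 ≤ l.length) :
    ∀ M, N.IsMLLS k M → ¬ ∃ p, M.Edge p x ∧ M.Edge p y := by
  rintro M ⟨E, hval, huniq, hblob, hclean, -⟩ ⟨p, hpx, hpy⟩
  have hE : ∀ e ∈ E, N.IsReticEdge e := fun e he => (hval e he).1
  obtain ⟨D, rfl, hD⟩ := hN.exists_eq_contract_of_cleanUp hE hclean
  exact hN.not_pathVia_cherry hE (hN.1.inDistinctBlobs huniq hblob) hD hx hy hd
    (Net.edge_contract.1 hpx).2.2.2 (Net.edge_contract.1 hpy).2.2.2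

/-- If a binary level-`k` tree-child network `N` has leaves `x, y` with
up-down distance at least 4 (every up-down path has at least 5 nodes), then no MLLS of
`N` contains `x` and `y` as a cherry. -/
theorem pi_implies_no_cherry_in_MLLS {X : Type} (N : Net X) (hN : N.TreeChild)
    (k : ℕ) (hk : 1 ≤ k) (hl : N.IsLevel k)
    (x y : ℕ) (hx : N.IsLeaf x) (hy : N.IsLeaf y)
    (hd : ∀ l, N.IsUpDownPath x y l → 5 ≤ l.length) :
    ∀ M, N.IsMLLS k M → ¬ ∃ p, M.Edge p x ∧ M.Edge p y :=
  pi_implies_no_cherry_in_MLLS_general N hN k x y hx hy hd
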